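/- OUTWEAK soundness: under the Dijkstra invariants, if v ∈ F satisfies d[v] ≤ min( min_{u∈F,w∈F,(u,w)∈E}(d[u]+c(u,w)), min_{u∈F,w∈U,w'∈V,(u,w),(w,w')∈E}(d[u]+c(u,w)+c(w,w')) ), then d[v] = dist(s,v). -/

import Mathlib

open scoped ENNReal Classical
open Set

variable {V : Type*}

/-- Cost of a path (list of vertices): sum of edge costs of consecutive pairs. -/
noncomputable def pathCost (c : V → V → NNReal) (l : List V) : ℝ≥0∞ :=
  ((l.zip l.tail).map fun p => (c p.1 p.2 : ℝ≥0∞)).sum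

/-- `l` is a path from `s` to `v` following edges of `E`. -/
def IsPath (E : V → V → Prop) (s v : V) (l : List V) : Prop :=
  l.head? = some s ∧ l.getLast? = some v ∧ l.Chain' E

/-- A path from `s` to `v` all of whose intermediate vertices lie in `S`. -/
def IsSPath (E : V → V → Prop) (S : Set V) (s v : V) (l : List V) : Prop :=
  IsPath E s v l ∧ ∀ x ∈ l.dropLast.tail, x ∈ S

/-- Shortest-path distance from `s` to `v` (`∞` if unreachable). -/
noncomputable def gdist (E : V → V → Prop) (c : V → V → NNReal) (s v : V) : ℝ≥0∞ :=
  ⨅ l ∈ {l | IsPath E s v l}, pathCost c l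

/-- Shortest distance from `s` to `v` over paths with intermediates in `S`. -/
noncomputable def sdist (E : V → V → Prop) (c : V → V → NNReal) (S : Set V) (s v : V) : ℝ≥0∞ :=
  ⨅ l ∈ {l | IsSPath E S s v l}, pathCost c l

/-- The invariants of Dijkstra's algorithm for the partition `(S, F, U)` of the
vertex set with tentative distances `d`. -/
structure DijkstraInv (E : V → V → Prop) (c : V → V → NNReal) (s : V)
    (S F U : Set V) (d : V → ℝ≥0∞) : Prop where
  cover : S ∪ F ∪ U = univ
  disjSF : Disjoint S F
  disjSU : Disjoint S U
  disjFU : Disjoint F U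
  settled : ∀ u ∈ S, d u = gdist E c s u
  settledPath : ∀ u ∈ S, ∃ l, IsSPath E S s u l ∧ pathCost c l = d u
  fringe : ∀ u ∈ F, d u = sdist E c S s u ∧ ∃ l, IsSPath E S s u l
  unexplored : ∀ u ∈ U, ¬ ∃ l, IsSPath E S s u l
lemma pathCost_single (c : V → V → NNReal) (a : V) : pathCost c [a] = 0 := rfl

lemma pathCost_cons_cons (c : V → V → NNReal) (a b : V) (l : List V) :
    pathCost c (a :: b :: l) = (c a b : ℝ≥0∞) + pathCost c (b :: l) := rfl

lemma pathCost_append_single (c : V → V → NNReal) :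
    ∀ (l : List V) (a x : V), l.getLast? = some a →
      pathCost c (l ++ [x]) = pathCost c l + (c a x : ℝ≥0∞)
  | [], a, x, h => by simp at h
  | [b], a, x, h => by
      simp only [List.getLast?_singleton, Option.some.injEq] at h
      subst h
      simp [pathCost_single, pathCost_cons_cons]
  | b :: d :: t, a, x, h => by
      have h' : (d :: t).getLast? = some a := by
        simpa [List.getLast?_cons_cons] using h
      have : (b :: d :: t) ++ [x] = b :: ((d :: t) ++ [x]) := by simp
      rw [this]
      have hdd : ((d :: t) ++ [x]) = d :: (t ++ [x]) := by simp
      rw [hdd, pathCost_cons_cons, ← hdd, pathCost_append_single c (d :: t) a x h',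
        pathCost_cons_cons, add_assoc]

lemma IsPath.append {E : V → V → Prop} {s a x : V} {l : List V}
    (h : IsPath E s a l) (he : E a x) : IsPath E s x (l ++ [x]) := by
  obtain ⟨h1, h2, h3⟩ := h
  have hne : l ≠ [] := by rintro rfl; simp at h1
  refine ⟨?_, List.getLast?_concat, ?_⟩
  · cases l with
    | nil => exact absurd rfl hne
    | cons b t => simpa using h1
  · apply List.isChain_append.mpr
    refine ⟨h3, List.isChain_singleton x, ?_⟩
    intro p hp q hq
    simp only [List.head?_cons, Option.mem_def, Option.some.injEq] at hq
    rw [h2] at hp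
    simp only [Option.mem_def, Option.some.injEq] at hp
    subst hp; subst hq; exact he

lemma mem_tail_of_concat : ∀ {l : List V} {a y : V}, l.getLast? = some a →
    y ∈ l.tail → y ∈ l.dropLast.tail ∨ y = a
  | [], a, y, h, _ => by simp at h
  | [_], _, y, _, hy => by simp at hy
  | b :: d :: t, a, y, h, hy => by
      have h' : (d :: t).getLast? = some a := by
        simpa [List.getLast?_cons_cons] using h
      have hd : (b :: d :: t).dropLast.tail = (d :: t).dropLast := by
        cases t <;> simp
      rw [hd]
      rcases List.mem_cons.mp hy with rfl | hyt
      · cases t with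
        | nil => right; simpa using h'
        | cons e t' => left; simp
      · rcases mem_tail_of_concat h' hyt with hh | rfl
        · exact Or.inl (List.mem_of_mem_tail hh)
        · exact Or.inr rfl

lemma IsSPath.append {E : V → V → Prop} {S : Set V} {s a x : V} {l : List V}
    (h : IsSPath E S s a l) (ha : a ∈ S) (he : E a x) : IsSPath E S s x (l ++ [x]) := by
  refine ⟨h.1.append he, ?_⟩
  rw [List.dropLast_concat]
  intro y hy
  rcases mem_tail_of_concat h.1.2.1 hy with h' | rfl
  · exact h.2 y h'
  · exact ha

lemma gdist_le {E : V → V → Prop} {c : V → V → NNReal} {s v : V} {l : List V}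
    (h : IsPath E s v l) : gdist E c s v ≤ pathCost c l := iInf₂_le l h

lemma sdist_le {E : V → V → Prop} {c : V → V → NNReal} {S : Set V} {s v : V} {l : List V}
    (h : IsSPath E S s v l) : sdist E c S s v ≤ pathCost c l := iInf₂_le l h

lemma gdist_le_sdist (E : V → V → Prop) (c : V → V → NNReal) (S : Set V) (s v : V) :
    gdist E c s v ≤ sdist E c S s v :=
  le_iInf₂ fun l hl => gdist_le hl.1

lemma le_biInf_add {α : Type*} {P : α → Prop} {f : α → ℝ≥0∞} {k b : ℝ≥0∞}
    (h : ∀ a, P a → b ≤ f a + k) : b ≤ (⨅ a ∈ {a | P a}, f a) + k := by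
  have e : (⨅ a ∈ {a | P a}, f a) + k = ⨅ a : {a // P a}, (f a + k) := by
    rw [show (⨅ a ∈ {a | P a}, f a) = ⨅ a : {a // P a}, f a from iInf_subtype']
    exact ENNReal.iInf_add
  rw [e]
  exact le_iInf fun a => h a a.2

lemma gdist_triangle {E : V → V → Prop} {c : V → V → NNReal} {s a x : V}
    (he : E a x) : gdist E c s x ≤ gdist E c s a + (c a x : ℝ≥0∞) := by
  apply le_biInf_add
  intro l hl
  rw [← pathCost_append_single c l a x hl.2.1]
  exact gdist_le (hl.append he)

lemma singleton_spath (E : V → V → Prop) (S : Set V) (s : V) : IsSPath E S s s [s] :=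
  ⟨⟨rfl, rfl, List.isChain_singleton s⟩, by simp⟩

lemma keyA (E : V → V → Prop) (c : V → V → NNReal) (s : V)
    (S F U : Set V) (d : V → ℝ≥0∞) (hinv : DijkstraInv E c s S F U d)
    (v : V) (hv : v ∈ F)
    (hOUTWEAK : d v ≤
      min (⨅ p ∈ {p : V × V | p.1 ∈ F ∧ p.2 ∈ F ∧ E p.1 p.2},
            (d p.1 + (c p.1 p.2 : ℝ≥0∞)))
        (⨅ t ∈ {t : V × V × V | t.1 ∈ F ∧ t.2.1 ∈ U ∧ E t.1 t.2.1 ∧ E t.2.1 t.2.2},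
            (d t.1 + (c t.1 t.2.1 : ℝ≥0∞) + (c t.2.1 t.2.2 : ℝ≥0∞)))) :
    ∀ (l : List V) (a : V), a ∈ S ∪ F → IsPath E a v l → d v ≤ d a + pathCost c l := by
  intro l
  induction l with
  | nil => intro a _ hp; exact absurd hp.1 (by simp)
  | cons b t ih =>
    intro a ha hp
    obtain ⟨h1, h2, h3⟩ := hp
    have hb : b = a := by simpa using h1
    subst hb
    cases t with
    | nil =>
      have : b = v := by simpa using h2
      subst this
      simp [pathCost_single]
    | cons x r =>
      have hE : E b x := (List.isChain_cons_cons.mp h3).1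
      have hpx : IsPath E x v (x :: r) :=
        ⟨rfl, by simpa [List.getLast?_cons_cons] using h2, (List.isChain_cons_cons.mp h3).2⟩
      have hxmem : x ∈ S ∪ F ∪ U := hinv.cover ▸ mem_univ x
      rw [pathCost_cons_cons]
      -- helper: d x ≤ d b + c b x in the S/F cases, then use ih
      have step : (d x ≤ d b + (c b x : ℝ≥0∞)) → x ∈ S ∪ F →
          d v ≤ d b + ((c b x : ℝ≥0∞) + pathCost c (x :: r)) := by
        intro hdx hxSF
        calc d v ≤ d x + pathCost c (x :: r) := ih x hxSF hpx
          _ ≤ (d b + (c b x : ℝ≥0∞)) + pathCost c (x :: r) := by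
              exact add_le_add_left hdx _
          _ = d b + ((c b x : ℝ≥0∞) + pathCost c (x :: r)) := add_assoc _ _ _
      rcases ha with haS | haF
      · -- a = b ∈ S
        obtain ⟨Pa, hPa, hPacost⟩ := hinv.settledPath b haS
        have hlast : Pa.getLast? = some b := hPa.1.2.1
        have hcostx : pathCost c (Pa ++ [x]) = d b + (c b x : ℝ≥0∞) := by
          rw [pathCost_append_single c Pa b x hlast, hPacost]
        rcases hxmem with (hxS | hxF) | hxU
        · refine step ?_ (Or.inl hxS)
          rw [hinv.settled x hxS, ← hcostx]
          exact gdist_le (hPa.1.append hE)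
        · refine step ?_ (Or.inr hxF)
          rw [(hinv.fringe x hxF).1, ← hcostx]
          exact sdist_le (hPa.append haS hE)
        · exact absurd ⟨Pa ++ [x], hPa.append haS hE⟩ (hinv.unexplored x hxU)
      · -- a = b ∈ F
        rcases hxmem with (hxS | hxF) | hxU
        · refine step ?_ (Or.inl hxS)
          rw [hinv.settled x hxS]
          calc gdist E c s x ≤ gdist E c s b + (c b x : ℝ≥0∞) := gdist_triangle hE
            _ ≤ sdist E c S s b + (c b x : ℝ≥0∞) :=
                add_le_add_left (gdist_le_sdist E c S s b) _
            _ = d b + (c b x : ℝ≥0∞) := by rw [(hinv.fringe b haF).1]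
        · -- use OUTWEAK part 1
          have h1' : d v ≤ d b + (c b x : ℝ≥0∞) := by
            refine le_trans (le_trans hOUTWEAK (min_le_left _ _)) ?_
            exact iInf₂_le (b, x) ⟨haF, hxF, hE⟩
          calc d v ≤ d b + (c b x : ℝ≥0∞) := h1'
            _ ≤ d b + ((c b x : ℝ≥0∞) + pathCost c (x :: r)) := by
                exact add_le_add_right (le_add_right le_rfl) _
        · -- x ∈ U : r must be nonempty
          cases r with
          | nil =>
            have : x = v := by simpa using hpx.2.1
            subst this
            exact absurd hv (hinv.disjFU.symm.ne_of_mem hxU hv rfl |>.elim)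
          | cons y r' =>
            have hExy : E x y := (List.isChain_cons_cons.mp (List.isChain_cons_cons.mp h3).2).1
            have h2' : d v ≤ d b + (c b x : ℝ≥0∞) + (c x y : ℝ≥0∞) := by
              refine le_trans (le_trans hOUTWEAK (min_le_right _ _)) ?_
              exact iInf₂_le (b, x, y) ⟨haF, hxU, hE, hExy⟩
            rw [pathCost_cons_cons]
            calc d v ≤ d b + (c b x : ℝ≥0∞) + (c x y : ℝ≥0∞) := h2'
              _ ≤ d b + ((c b x : ℝ≥0∞) + ((c x y : ℝ≥0∞) + pathCost c (y :: r'))) := by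
                  rw [add_assoc]
                  exact add_le_add_right (add_le_add_right (le_add_right le_rfl) _) _

/-- Soundness of the OUTWEAK criterion. -/
theorem OUTWEAK_sound (E : V → V → Prop) (c : V → V → NNReal) (s : V)
    (S F U : Set V) (d : V → ℝ≥0∞) (hinv : DijkstraInv E c s S F U d)
    (v : V) (hv : v ∈ F)
    (hOUTWEAK : d v ≤
      min (⨅ p ∈ {p : V × V | p.1 ∈ F ∧ p.2 ∈ F ∧ E p.1 p.2},
            (d p.1 + (c p.1 p.2 : ℝ≥0∞)))
        (⨅ t ∈ {t : V × V × V | t.1 ∈ F ∧ t.2.1 ∈ U ∧ E t.1 t.2.1 ∧ E t.2.1 t.2.2},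
            (d t.1 + (c t.1 t.2.1 : ℝ≥0∞) + (c t.2.1 t.2.2 : ℝ≥0∞)))) :
    d v = gdist E c s v := by
  have hdv : d v = sdist E c S s v := (hinv.fringe v hv).1
  have hsU : s ∉ U := fun h => hinv.unexplored s h ⟨[s], singleton_spath E S s⟩
  have hsSF : s ∈ S ∪ F := by
    have : s ∈ S ∪ F ∪ U := hinv.cover ▸ mem_univ s
    rcases this with h | h
    · exact h
    · exact absurd h hsU
  have hds : d s = 0 := by
    have hle : d s ≤ 0 := by
      rcases hsSF with h | h
      · rw [hinv.settled s h]
        simpa [pathCost_single] using gdist_le (E := E) (c := c) (singleton_spath E S s).1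
      · rw [(hinv.fringe s h).1]
        simpa [pathCost_single] using sdist_le (E := E) (c := c) (singleton_spath E S s)
    exact le_antisymm hle zero_le
  refine le_antisymm ?_ (hdv ▸ gdist_le_sdist E c S s v)
  refine le_iInf₂ fun l hl => ?_
  have := keyA E c s S F U d hinv v hv hOUTWEAK l s hsSF hl
  rwa [hds, zero_add] at this
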